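/- arXiv:1911.03169 — 6 statements merged into one kernel-verified Lean document; each statement's English description precedes it below -/
import Mathlib

section
/- Let G be a finite simple graph without isolated vertices, e a pendant edge of G (an edge incident to a vertex of degree 1), and F ⊆ E \ {e}. Then γ(F ∪ {e}) = γ(F) + 1, where γ(F) = α(G[V⟨F⟩]). -/
/-- `closedVerts G F` is V⟨F⟩: the set of vertices of `G` all of whose incident
edges belong to `F`. -/
def closedVerts {V : Type*} (G : SimpleGraph V) (F : Set (Sym2 V)) : Set V :=
  {v | ∀ e ∈ G.edgeSet, v ∈ e → e ∈ F}

/-- `s` is an independent set of the induced subgraph `G[A]`. -/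
def IsIndepOn {V : Type*} (G : SimpleGraph V) (A : Set V) (s : Finset V) : Prop :=
  ↑s ⊆ A ∧ ∀ u ∈ s, ∀ v ∈ s, ¬ G.Adj u v

/-- `gamma G F = α(G[V⟨F⟩])`, the maximum size of an independent set of the
subgraph of `G` induced on `closedVerts G F`. -/
noncomputable def gamma {V : Type*} [Fintype V] (G : SimpleGraph V) (F : Set (Sym2 V)) : ℕ :=
  sSup {n | ∃ s : Finset V, IsIndepOn G (closedVerts G F) s ∧ s.card = n}


theorem stmt1 {V : Type*} [Fintype V] (G : SimpleGraph V) [DecidableRel G.Adj]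
    (hiso : ∀ v : V, ∃ u, G.Adj v u)
    (e : Sym2 V) (he : e ∈ G.edgeSet)
    (hpend : ∃ v ∈ e, G.degree v = 1)
    (F : Set (Sym2 V)) (hF : F ⊆ G.edgeSet) (heF : e ∉ F) :
    gamma G (insert e F) = gamma G F + 1 := by
  classical
  obtain ⟨x, hxe, hdeg⟩ := hpend
  set y := Sym2.Mem.other hxe with hy
  have hspec : s(x, y) = e := Sym2.other_spec hxe
  have hxy : G.Adj x y := by
    rw [← SimpleGraph.mem_edgeSet, hspec]; exact he
  have hne : x ≠ y := hxy.ne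
  have huniq : ∀ u, G.Adj x u → u = y := fun u hu =>
    Finset.card_le_one.mp hdeg.le u ((SimpleGraph.mem_neighborFinset G x u).mpr hu)
      y ((SimpleGraph.mem_neighborFinset G x y).mpr hxy)
  -- the only edge at x is e
  have hedge : ∀ f ∈ G.edgeSet, x ∈ f → f = e := by
    intro f hf hxf
    have h2 : s(x, Sym2.Mem.other hxf) = f := Sym2.other_spec hxf
    have hadj : G.Adj x (Sym2.Mem.other hxf) := by
      rw [← SimpleGraph.mem_edgeSet, h2]; exact hf
    rw [← h2, huniq _ hadj, hspec]
  have hxnotF : x ∉ closedVerts G F := fun h => heF (h e he hxe)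
  have hynotF : y ∉ closedVerts G F := fun h => heF (h e he (by rw [← hspec]; simp))
  have hxins : x ∈ closedVerts G (insert e F) := fun f hf hxf => (hedge f hf hxf) ▸ Set.mem_insert e F
  have hmono : closedVerts G F ⊆ closedVerts G (insert e F) := fun v hv f hf hvf =>
    Set.mem_insert_of_mem _ (hv f hf hvf)
  have hdown : ∀ v ∈ closedVerts G (insert e F), v ≠ x → v ≠ y → v ∈ closedVerts G F := by
    intro v hv hvx hvy f hf hvf
    rcases hv f hf hvf with h | h
    · exfalso
      rw [h, ← hspec, Sym2.mem_iff] at hvf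
      tauto
    · exact h
  set S : Set (Sym2 V) → Set ℕ :=
    fun F' => {n | ∃ s : Finset V, IsIndepOn G (closedVerts G F') s ∧ s.card = n} with hS
  have hbdd : ∀ F', BddAbove (S F') := by
    intro F'
    refine ⟨Fintype.card V, ?_⟩
    rintro n ⟨s, _, rfl⟩
    simpa using Finset.card_le_univ s
  have hne0 : ∀ F', (S F').Nonempty := by
    intro F'
    exact ⟨0, ∅, ⟨by simp, by simp⟩, by simp⟩
  have hmemF : gamma G F ∈ S F := Nat.sSup_mem (hne0 F) (hbdd F)
  have hmemI : gamma G (insert e F) ∈ S (insert e F) := Nat.sSup_mem (hne0 _) (hbdd _)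
  apply le_antisymm
  · -- ≤ direction
    obtain ⟨t, ⟨htsub, htind⟩, htcard⟩ := hmemI
    set t' := t \ {x, y} with ht'
    have ht'ind : IsIndepOn G (closedVerts G F) t' := by
      constructor
      · intro v hv
        simp only [ht', Finset.coe_sdiff, Set.mem_diff, Finset.coe_insert, Finset.mem_coe,
          Finset.mem_insert, Finset.coe_singleton] at hv
        obtain ⟨hvt, hvxy⟩ := hv
        exact hdown v (htsub hvt) (fun h => hvxy (by simp [h])) (fun h => hvxy (by simp [h]))
      · intro u hu v hv
        exact htind u (Finset.sdiff_subset hu) v (Finset.sdiff_subset hv)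
    have h1 : t'.card ≤ gamma G F := le_csSup (hbdd F) ⟨t', ht'ind, rfl⟩
    have hinter : (t ∩ {x, y}).card ≤ 1 := by
      by_cases hxt : x ∈ t
      · have hyt : y ∉ t := fun hyt => htind x hxt y hyt hxy
        have : t ∩ {x, y} ⊆ {x} := by
          intro z hz
          simp only [Finset.mem_inter, Finset.mem_insert, Finset.mem_singleton] at hz
          rcases hz.2 with h | h
          · simp [h]
          · exact absurd (h ▸ hz.1) hyt
        calc (t ∩ {x, y}).card ≤ ({x} : Finset V).card := Finset.card_le_card this
          _ = 1 := Finset.card_singleton x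
      · have : t ∩ {x, y} ⊆ {y} := by
          intro z hz
          simp only [Finset.mem_inter, Finset.mem_insert, Finset.mem_singleton] at hz
          rcases hz.2 with h | h
          · exact absurd (h ▸ hz.1) hxt
          · simp [h]
        calc (t ∩ {x, y}).card ≤ ({y} : Finset V).card := Finset.card_le_card this
          _ = 1 := Finset.card_singleton y
    have h2 : t.card ≤ t'.card + 1 := by
      have h3 := Finset.card_sdiff_add_card_inter t ({x, y} : Finset V)
      rw [← ht'] at h3
      omega
    omega
  · -- ≥ direction
    obtain ⟨s, ⟨hssub, hsind⟩, hscard⟩ := hmemF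
    have hxs : x ∉ s := fun h => hxnotF (hssub h)
    have hind : IsIndepOn G (closedVerts G (insert e F)) (insert x s) := by
      constructor
      · intro v hv
        simp only [Finset.coe_insert, Set.mem_insert_iff, Finset.mem_coe] at hv
        rcases hv with rfl | hv
        · exact hxins
        · exact hmono (hssub hv)
      · intro u hu v hv hadj
        simp only [Finset.mem_insert] at hu hv
        rcases hu with rfl | hu <;> rcases hv with rfl | hv
        · exact G.irrefl hadj
        · exact hynotF ((huniq v hadj) ▸ hssub hv)
        · exact hynotF ((huniq u hadj.symm) ▸ hssub hu)
        · exact hsind u hu v hv hadj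
    have : s.card + 1 ∈ S (insert e F) :=
      ⟨insert x s, hind, by rw [Finset.card_insert_of_notMem hxs]⟩
    have h4 := le_csSup (hbdd (insert e F)) this
    have heq : gamma G (insert e F) = sSup (S (insert e F)) := rfl
    rw [heq]
    omega
end

section
/- Let G be a finite simple graph without isolated vertices, e an edge of G that is not a pendant edge, and F ⊆ E \ {e}. Then γ(F ∪ {e}) = γ(F) or γ(F ∪ {e}) = γ(F) + 1. -/
lemma gammaSet_nonempty {V : Type*} [Fintype V] (G : SimpleGraph V) (F : Set (Sym2 V)) :
    {n | ∃ s : Finset V, IsIndepOn G (closedVerts G F) s ∧ s.card = n}.Nonempty :=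
  ⟨0, ∅, ⟨by simp, by simp⟩, rfl⟩

lemma gammaSet_bddAbove {V : Type*} [Fintype V] (G : SimpleGraph V) (F : Set (Sym2 V)) :
    BddAbove {n | ∃ s : Finset V, IsIndepOn G (closedVerts G F) s ∧ s.card = n} := by
  refine ⟨Fintype.card V, fun n hn => ?_⟩
  obtain ⟨s, _, rfl⟩ := hn
  exact s.card_le_univ.trans_eq Finset.card_univ

lemma le_gamma {V : Type*} [Fintype V] (G : SimpleGraph V) (F : Set (Sym2 V))
    (s : Finset V) (hs : IsIndepOn G (closedVerts G F) s) : s.card ≤ gamma G F :=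
  le_csSup (gammaSet_bddAbove G F) ⟨s, hs, rfl⟩

lemma gamma_mono {V : Type*} [Fintype V] (G : SimpleGraph V) {F F' : Set (Sym2 V)}
    (h : F ⊆ F') : gamma G F ≤ gamma G F' := by
  refine csSup_le (gammaSet_nonempty G F) ?_
  rintro n ⟨s, ⟨hsub, hind⟩, rfl⟩
  refine le_gamma G F' s ⟨fun v hv f hf hvf => h (hsub hv f hf hvf), hind⟩

theorem stmt2 {V : Type*} [Fintype V] (G : SimpleGraph V) [DecidableRel G.Adj]
    (hiso : ∀ v : V, ∃ u, G.Adj v u)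
    (e : Sym2 V) (he : e ∈ G.edgeSet)
    (hnpend : ¬ ∃ v ∈ e, G.degree v = 1)
    (F : Set (Sym2 V)) (hF : F ⊆ G.edgeSet) (heF : e ∉ F) :
    gamma G (insert e F) = gamma G F ∨ gamma G (insert e F) = gamma G F + 1 := by
  classical
  have hlow : gamma G F ≤ gamma G (insert e F) :=
    gamma_mono G (Set.subset_insert e F)
  have hhigh : gamma G (insert e F) ≤ gamma G F + 1 := by
    obtain ⟨s, ⟨hsub, hind⟩, hcard⟩ :=
      Nat.sSup_mem (gammaSet_nonempty G (insert e F)) (gammaSet_bddAbove G (insert e F))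
    induction e using Sym2.ind with
    | _ a b =>
    have hab : G.Adj a b := he
    set t := s.filter (fun v => v ∈ closedVerts G F) with ht
    set u := s.filter (fun v => v ∉ closedVerts G F) with hu
    have hcardsum : t.card + u.card = s.card :=
      Finset.card_filter_add_card_filter_not (fun v => v ∈ closedVerts G F)
    -- every vertex of u is an endpoint of e
    have hmem : ∀ x ∈ u, x = a ∨ x = b := by
      intro x hx
      rw [hu, Finset.mem_filter] at hx
      obtain ⟨hxs, hxn⟩ := hx
      simp only [closedVerts, Set.mem_setOf_eq, not_forall] at hxn
      obtain ⟨f, hf, hxf, hfF⟩ := hxn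
      have := hsub hxs f hf hxf
      rw [Set.mem_insert_iff] at this
      rcases this with rfl | h
      · exact Sym2.mem_iff.mp hxf
      · exact absurd h hfF
    have hu1 : u.card ≤ 1 := by
      rw [Finset.card_le_one]
      intro x hx y hy
      have hxs : x ∈ s := (Finset.mem_filter.mp hx).1
      have hys : y ∈ s := (Finset.mem_filter.mp hy).1
      rcases hmem x hx with rfl | rfl <;> rcases hmem y hy with rfl | rfl
      · rfl
      · exact absurd hab (hind x hxs y hys)
      · exact absurd hab (hind y hys x hxs)
      · rfl
    have htind : IsIndepOn G (closedVerts G F) t := by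
      constructor
      · intro v hv
        exact (Finset.mem_filter.mp hv).2
      · intro x hx y hy
        exact hind x (Finset.mem_filter.mp hx).1 y (Finset.mem_filter.mp hy).1
    have hle := le_gamma G F t htind
    have hcard' : s.card = gamma G (insert s(a, b) F) := hcard
    omega
  omega
end

section
/- Let G be a finite simple graph without isolated vertices, e an edge of G that is not a pendant edge, and F ⊆ E \ {e}. If γ(F ∪ {e}) = γ(F) + 1, then every maximum independent set of G[V⟨F ∪ {e}⟩] contains an endpoint of e that is not adjacent (in G) to any pendant vertex of G. -/
lemma card_le_gamma {V : Type*} [Fintype V] (G : SimpleGraph V) (F : Set (Sym2 V))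
    (s : Finset V) (h : IsIndepOn G (closedVerts G F) s) : s.card ≤ gamma G F := by
  apply le_csSup
  · refine ⟨Fintype.card V, ?_⟩
    rintro n ⟨t, -, rfl⟩
    exact le_trans t.card_le_univ (le_of_eq Finset.card_univ)
  · exact ⟨s, h, rfl⟩

theorem stmt3 {V : Type*} [Fintype V] (G : SimpleGraph V) [DecidableRel G.Adj]
    (hiso : ∀ v : V, ∃ u, G.Adj v u)
    (e : Sym2 V) (he : e ∈ G.edgeSet)
    (hnpend : ¬ ∃ v ∈ e, G.degree v = 1)
    (F : Set (Sym2 V)) (hF : F ⊆ G.edgeSet) (heF : e ∉ F)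
    (hg : gamma G (insert e F) = gamma G F + 1) :
    ∀ s : Finset V, IsIndepOn G (closedVerts G (insert e F)) s →
      s.card = gamma G (insert e F) →
      ∃ u ∈ s, u ∈ e ∧ ∀ w : V, G.Adj u w → G.degree w ≠ 1 := by
  classical
  intro s hs hcard
  induction e using Sym2.ind with
  | _ x y =>
  have hadj : G.Adj x y := he
  have hkey : ∀ v ∈ closedVerts G (insert s(x,y) F), v ∉ closedVerts G F → v = x ∨ v = y := by
    intro v hv hnv
    simp only [closedVerts, Set.mem_setOf_eq] at hnv
    push_neg at hnv
    obtain ⟨f, hf, hvf, hfF⟩ := hnv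
    rcases Set.mem_insert_iff.mp (hv f hf hvf) with h | h
    · subst h
      exact Sym2.mem_iff.mp hvf
    · exact absurd h hfF
  -- Step A: s contains an endpoint of e
  have hA : ∃ u ∈ s, u = x ∨ u = y := by
    by_contra hcon
    push_neg at hcon
    have hsub : ↑s ⊆ closedVerts G F := by
      intro v hv
      by_contra hnv
      rcases hkey v (hs.1 hv) hnv with rfl | rfl
      · exact (hcon v hv).1 rfl
      · exact (hcon v hv).2 rfl
    have := card_le_gamma G F s ⟨hsub, hs.2⟩
    omega
  obtain ⟨u, hu, hue⟩ := hA
  refine ⟨u, hu, Sym2.mem_iff.mpr hue, ?_⟩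
  intro w hw hdeg
  have hwu : G.Adj w u := hw.symm
  have honly : ∀ z, G.Adj w z → z = u := by
    intro z hz
    obtain ⟨a, ha⟩ := Finset.card_eq_one.mp (hdeg : (G.neighborFinset w).card = 1)
    have h1 : u ∈ G.neighborFinset w := by simpa using hwu
    have h2 : z ∈ G.neighborFinset w := by simpa using hz
    rw [ha, Finset.mem_singleton] at h1 h2
    rw [h1, h2]
  have huw : s(u,w) ∈ insert s(x,y) F :=
    hs.1 hu s(u,w) (G.mem_edgeSet.mpr hw) (Sym2.mem_mk_left u w)
  rcases Set.mem_insert_iff.mp huw with heq | hmem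
  · -- s(u,w) = e : then w ∈ e with degree 1, contradicting hnpend
    exact hnpend ⟨w, by rw [← heq]; exact Sym2.mem_mk_right u w, hdeg⟩
  · -- s(u,w) ∈ F : swap u for w
    have hwF : w ∈ closedVerts G F := by
      intro f hf hvf
      induction f using Sym2.ind with
      | _ a b =>
        have hab : G.Adj a b := hf
        rcases Sym2.mem_iff.mp hvf with rfl | rfl
        · have hb := honly b hab
          subst hb
          rwa [Sym2.eq_swap]
        · have ha := honly a hab.symm
          subst ha
          exact hmem
    have hwns : w ∉ s := fun hws => hs.2 u hu w hws hw
    set t := insert w (s.erase u) with ht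
    have htcard : t.card = s.card := by
      rw [ht, Finset.card_insert_of_notMem (fun h => hwns (Finset.mem_of_mem_erase h)),
        Finset.card_erase_of_mem hu]
      have : 1 ≤ s.card := Finset.card_pos.mpr ⟨u, hu⟩
      omega
    have htsub : ↑t ⊆ closedVerts G F := by
      intro v hv
      have hv' : v ∈ t := hv
      rcases Finset.mem_insert.mp hv' with rfl | hv''
      · exact hwF
      · obtain ⟨hvu, hvs⟩ := Finset.mem_erase.mp hv''
        by_contra hnv
        rcases hkey v (hs.1 hvs) hnv with rfl | rfl
        · rcases hue with rfl | rfl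
          · exact hvu rfl
          · exact hs.2 v hvs u hu hadj
        · rcases hue with rfl | rfl
          · exact hs.2 u hu v hvs hadj
          · exact hvu rfl
    have htind : ∀ a ∈ t, ∀ b ∈ t, ¬ G.Adj a b := by
      intro a ha b hb hab
      rcases Finset.mem_insert.mp ha with rfl | ha'
      · rcases Finset.mem_insert.mp hb with rfl | hb'
        · exact G.irrefl hab
        · exact (Finset.mem_erase.mp hb').1 (honly b hab)
      · rcases Finset.mem_insert.mp hb with rfl | hb'
        · exact (Finset.mem_erase.mp ha').1 (honly a hab.symm)
        · exact hs.2 a (Finset.mem_of_mem_erase ha') b (Finset.mem_of_mem_erase hb') hab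
    have := card_le_gamma G F t ⟨htsub, htind⟩
    omega
end

section
/- Let G = (V,E) be a finite simple graph without isolated vertices with independent set game characteristic function γ(F) = α(G[V⟨F⟩]). If there exists a non-pendant edge e of G that is not incident to any pendant edge, then γ is not supermodular; i.e., there exist S, T ⊆ E with γ(S) + γ(T) > γ(S ∩ T) + γ(S ∪ T). -/
/-- the star of edges at a vertex -/
def delta {V : Type*} (G : SimpleGraph V) (x : V) : Set (Sym2 V) :=
  {f | f ∈ G.edgeSet ∧ x ∈ f}

lemma zero_mem_gammaSet {V : Type*} [Fintype V] (G : SimpleGraph V) (F : Set (Sym2 V)) :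
    0 ∈ {n | ∃ s : Finset V, IsIndepOn G (closedVerts G F) s ∧ s.card = n} :=
  ⟨∅, ⟨by simp, by simp⟩, rfl⟩

lemma gamma_eq_zero {V : Type*} [Fintype V] (G : SimpleGraph V) {F : Set (Sym2 V)}
    (h : ∀ x, x ∉ closedVerts G F) : gamma G F = 0 := by
  refine Nat.le_zero.mp (csSup_le ⟨0, zero_mem_gammaSet G F⟩ ?_)
  rintro n ⟨s, ⟨hsub, -⟩, rfl⟩
  have hs : s = ∅ := Finset.eq_empty_of_forall_notMem fun a ha => h a (hsub ha)
  simp [hs]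

lemma gamma_eq_one {V : Type*} [Fintype V] (G : SimpleGraph V) {F : Set (Sym2 V)} {x : V}
    (hx : x ∈ closedVerts G F)
    (hadj : ∀ a ∈ closedVerts G F, ∀ b ∈ closedVerts G F, a ≠ b → G.Adj a b) :
    gamma G F = 1 := by
  have hbound : ∀ n ∈ {n | ∃ s : Finset V, IsIndepOn G (closedVerts G F) s ∧ s.card = n},
      n ≤ 1 := by
    rintro n ⟨s, ⟨hsub, hind⟩, rfl⟩
    refine Finset.card_le_one.mpr fun a ha b hb => ?_
    by_contra hne
    exact hind a ha b hb (hadj a (hsub ha) b (hsub hb) hne)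
  refine le_antisymm (csSup_le ⟨0, zero_mem_gammaSet G F⟩ hbound) (le_csSup ⟨1, hbound⟩ ?_)
  refine ⟨{x}, ⟨by simpa using hx, ?_⟩, Finset.card_singleton x⟩
  intro a ha b hb
  simp only [Finset.mem_singleton] at ha hb
  subst ha; subst hb
  exact G.irrefl

theorem stmt5 {V : Type*} [Fintype V] (G : SimpleGraph V) [DecidableRel G.Adj]
    (hiso : ∀ v : V, ∃ u, G.Adj v u)
    (e : Sym2 V) (he : e ∈ G.edgeSet)
    (hnpend : ¬ ∃ v ∈ e, G.degree v = 1)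
    (hninc : ¬ ∃ f ∈ G.edgeSet, (∃ v ∈ f, G.degree v = 1) ∧ ∃ u : V, u ∈ e ∧ u ∈ f) :
    ∃ S T : Set (Sym2 V), S ⊆ G.edgeSet ∧ T ⊆ G.edgeSet ∧
      gamma G S + gamma G T > gamma G (S ∩ T) + gamma G (S ∪ T) := by
  induction e using Sym2.ind with
  | _ u v =>
  rw [SimpleGraph.mem_edgeSet] at he
  have hne : u ≠ v := he.ne
  -- no neighbor of u or v is pendant
  have key : ∀ x y : V, (x = u ∨ x = v) → G.Adj x y → G.degree y ≠ 1 := by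
    intro x y hx hxy hdy
    refine hninc ⟨s(x,y), (SimpleGraph.mem_edgeSet G).mpr hxy,
      ⟨y, Sym2.mem_mk_right x y, hdy⟩, x, ?_, Sym2.mem_mk_left x y⟩
    rcases hx with rfl | rfl
    · exact Sym2.mem_mk_left x v
    · exact Sym2.mem_mk_right u x
  -- a vertex all of whose edges contain x is a pendant neighbor of x
  have hdeg1 : ∀ w x : V, w ≠ x → (∀ f ∈ G.edgeSet, w ∈ f → x ∈ f) →
      G.Adj w x ∧ G.degree w = 1 := by
    intro w x hwx hall
    have hnb : ∀ z, G.Adj w z → z = x := by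
      intro z hz
      have hx : x ∈ s(w,z) :=
        hall s(w,z) ((SimpleGraph.mem_edgeSet G).mpr hz) (Sym2.mem_mk_left w z)
      rcases Sym2.mem_iff.mp hx with h' | h'
      · exact absurd h'.symm hwx
      · exact h'.symm
    obtain ⟨y, hy⟩ := hiso w
    have hyx := hnb y hy
    subst hyx
    refine ⟨hy, ?_⟩
    have hnf : G.neighborFinset w = {y} := by
      ext z
      simp only [SimpleGraph.mem_neighborFinset, Finset.mem_singleton]
      exact ⟨hnb z, fun h => by subst h; exact hy⟩
    show (G.neighborFinset w).card = 1
    rw [hnf]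
    exact Finset.card_singleton y
  have hself : ∀ x : V, x ∈ closedVerts G (delta G x) :=
    fun x f hf hxf => ⟨hf, hxf⟩
  have hCx : ∀ x, (x = u ∨ x = v) → ∀ y ∈ closedVerts G (delta G x), y = x := by
    intro x hx y hy
    by_contra hyx
    have h2 := hdeg1 y x hyx (fun f hf hyf => (hy f hf hyf).2)
    exact key x y hx h2.1.symm h2.2
  have hγx : ∀ x, (x = u ∨ x = v) → gamma G (delta G x) = 1 := by
    intro x hx
    refine gamma_eq_one G (hself x) ?_
    intro a ha b hb hab
    rw [hCx x hx a ha, hCx x hx b hb] at hab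
    exact absurd rfl hab
  by_cases hW : ∃ w, w ≠ u ∧ w ≠ v ∧ ∀ f ∈ G.edgeSet, w ∈ f → u ∈ f ∨ v ∈ f
  · -- Case B: a vertex w with neighborhood exactly {u, v}
    obtain ⟨w, hwu, hwv, hw⟩ := hW
    have hnbrw : ∀ z, G.Adj w z → z = u ∨ z = v := by
      intro z hz
      rcases hw s(w,z) ((SimpleGraph.mem_edgeSet G).mpr hz) (Sym2.mem_mk_left w z) with h | h
      · rcases Sym2.mem_iff.mp h with h' | h'
        · exact absurd h'.symm hwu
        · exact Or.inl h'.symm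
      · rcases Sym2.mem_iff.mp h with h' | h'
        · exact absurd h'.symm hwv
        · exact Or.inr h'.symm
    have hwadj_u : G.Adj w u := by
      by_contra hnadj
      have hall : ∀ f ∈ G.edgeSet, w ∈ f → v ∈ f := by
        intro f hf hwf
        rcases hw f hf hwf with h | h
        · exfalso
          have hfeq : f = s(w, u) := (Sym2.mem_and_mem_iff hwu).mp ⟨hwf, h⟩
          exact hnadj ((SimpleGraph.mem_edgeSet G).mp (hfeq ▸ hf))
        · exact h
      have h2 := hdeg1 w v hwv hall
      exact key v w (Or.inr rfl) h2.1.symm h2.2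
    have hwadj_v : G.Adj w v := by
      by_contra hnadj
      have hall : ∀ f ∈ G.edgeSet, w ∈ f → u ∈ f := by
        intro f hf hwf
        rcases hw f hf hwf with h | h
        · exact h
        · exfalso
          have hfeq : f = s(w, v) := (Sym2.mem_and_mem_iff hwv).mp ⟨hwf, h⟩
          exact hnadj ((SimpleGraph.mem_edgeSet G).mp (hfeq ▸ hf))
      have h2 := hdeg1 w u hwu hall
      exact key u w (Or.inl rfl) h2.1.symm h2.2
    have hγw : gamma G (delta G w) = 1 := by
      have hCw : ∀ y ∈ closedVerts G (delta G w), y = w := by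
        intro y hy
        by_contra hyw
        have h2 := hdeg1 y w hyw (fun f hf hyf => (hy f hf hyf).2)
        rcases hnbrw y h2.1.symm with rfl | rfl
        · exact key v y (Or.inr rfl) he.symm h2.2
        · exact key u y (Or.inl rfl) he h2.2
      refine gamma_eq_one G (hself w) ?_
      intro a ha b hb hab
      rw [hCw a ha, hCw b hb] at hab
      exact absurd rfl hab
    have hγcap : gamma G (delta G w ∩ delta G u) = 0 := by
      refine gamma_eq_zero G ?_
      intro y hy
      obtain ⟨z, hz⟩ := hiso y
      have h := hy s(y,z) ((SimpleGraph.mem_edgeSet G).mpr hz) (Sym2.mem_mk_left y z)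
      have hwf : w ∈ s(y,z) := h.1.2
      have huf : u ∈ s(y,z) := h.2.2
      rcases Sym2.mem_iff.mp hwf with h1 | h1
      · -- y = w : all edges of w contain u, but s(w,v) doesn't
        subst h1
        have h3 := (hy s(w,v) ((SimpleGraph.mem_edgeSet G).mpr hwadj_v)
          (Sym2.mem_mk_left w v)).2.2
        rcases Sym2.mem_iff.mp h3 with h4 | h4
        · exact hwu h4.symm
        · exact hne h4
      · rcases Sym2.mem_iff.mp huf with h2 | h2
        · -- y = u : all edges of u contain w, but s(u,v) doesn't
          subst h2
          have h3 := (hy s(u,v) ((SimpleGraph.mem_edgeSet G).mpr he)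
            (Sym2.mem_mk_left u v)).1.2
          rcases Sym2.mem_iff.mp h3 with h4 | h4
          · exact hwu h4
          · exact hwv h4
        · exact hwu (h1.trans h2.symm)
    have hγcup : gamma G (delta G w ∪ delta G u) = 1 := by
      have hsub : ∀ a ∈ closedVerts G (delta G w ∪ delta G u), a = u ∨ a = v ∨ a = w := by
        intro a ha
        by_contra hcon
        push_neg at hcon
        obtain ⟨hau, hav, haw⟩ := hcon
        have hall : ∀ f ∈ G.edgeSet, a ∈ f → u ∈ f := by
          intro f hf haf
          rcases ha f hf haf with h | h
          · exfalso
            have hfeq : f = s(a, w) := (Sym2.mem_and_mem_iff haw).mp ⟨haf, h.2⟩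
            have hadj : G.Adj a w := (SimpleGraph.mem_edgeSet G).mp (hfeq ▸ hf)
            rcases hnbrw a hadj.symm with h' | h'
            · exact hau h'
            · exact hav h'
          · exact h.2
        have h2 := hdeg1 a u hau hall
        exact key u a (Or.inl rfl) h2.1.symm h2.2
      have huin : u ∈ closedVerts G (delta G w ∪ delta G u) :=
        fun f hf huf => Or.inr ⟨hf, huf⟩
      refine gamma_eq_one G huin ?_
      intro a ha b hb hab
      rcases hsub a ha with rfl | rfl | rfl <;> rcases hsub b hb with rfl | rfl | rfl <;>
        first
          | exact absurd rfl hab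
          | exact he
          | exact he.symm
          | exact hwadj_u
          | exact hwadj_u.symm
          | exact hwadj_v
          | exact hwadj_v.symm
    refine ⟨delta G w, delta G u, fun f hf => hf.1, fun f hf => hf.1, ?_⟩
    rw [hγw, hγx u (Or.inl rfl), hγcap, hγcup]
    norm_num
  · -- Case A
    have hγcap : gamma G (delta G u ∩ delta G v) = 0 := by
      refine gamma_eq_zero G ?_
      intro y hy
      obtain ⟨z, hz⟩ := hiso y
      have h := hy s(y,z) ((SimpleGraph.mem_edgeSet G).mpr hz) (Sym2.mem_mk_left y z)
      have huf : u ∈ s(y,z) := h.1.2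
      have hvf : v ∈ s(y,z) := h.2.2
      rcases Sym2.mem_iff.mp huf with h1 | h1
      · -- y = u : all edges of u contain v; pendant contradiction
        subst h1
        have h2 := hdeg1 u v hne (fun f hf hyf => (hy f hf hyf).2.2)
        exact key v u (Or.inr rfl) h2.1.symm h2.2
      · rcases Sym2.mem_iff.mp hvf with h2 | h2
        · subst h2
          have h3 := hdeg1 v u hne.symm (fun f hf hyf => (hy f hf hyf).1.2)
          exact key u v (Or.inl rfl) h3.1.symm h3.2
        · exact hne (h1.trans h2.symm)
    have hγcup : gamma G (delta G u ∪ delta G v) = 1 := by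
      have hsub : ∀ a ∈ closedVerts G (delta G u ∪ delta G v), a = u ∨ a = v := by
        intro a ha
        by_contra hcon
        push_neg at hcon
        refine hW ⟨a, hcon.1, hcon.2, ?_⟩
        intro f hf haf
        rcases ha f hf haf with h | h
        · exact Or.inl h.2
        · exact Or.inr h.2
      have huin : u ∈ closedVerts G (delta G u ∪ delta G v) :=
        fun f hf huf => Or.inl ⟨hf, huf⟩
      refine gamma_eq_one G huin ?_
      intro a ha b hb hab
      rcases hsub a ha with rfl | rfl <;> rcases hsub b hb with rfl | rfl <;>
        first
          | exact absurd rfl hab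
          | exact he
          | exact he.symm
    refine ⟨delta G u, delta G v, fun f hf => hf.1, fun f hf => hf.1, ?_⟩
    rw [hγx u (Or.inl rfl), hγx v (Or.inr rfl), hγcap, hγcup]
    norm_num
end

section
/- Let G = (V,E) be a finite simple graph without isolated vertices with a vertex v of degree at least 2 that is not adjacent to any pendant vertex. Then the function γ(F) = α(G[V⟨F⟩]) is not submodular: there exist disjoint nonempty S, T ⊆ δ(v) with S ∪ T = δ(v) such that γ(S) + γ(T) < γ(S ∩ T) + γ(S ∪ T). -/
lemma gamma_of_closed_empty {V : Type*} [Fintype V] (G : SimpleGraph V) (F : Set (Sym2 V))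
    (h : closedVerts G F = ∅) : gamma G F = 0 := by
  have hset : {n | ∃ s : Finset V, IsIndepOn G (closedVerts G F) s ∧ s.card = n} = {0} := by
    ext n
    constructor
    · rintro ⟨s, ⟨hsub, -⟩, rfl⟩
      have : s = ∅ := by
        rw [← Finset.coe_eq_empty]
        rw [h] at hsub
        exact Set.subset_empty_iff.mp hsub
      simp [this]
    · rintro rfl
      exact ⟨∅, ⟨by simp, by simp⟩, by simp⟩
  rw [gamma, hset, csSup_singleton]

theorem stmt9 {V : Type*} [Fintype V] (G : SimpleGraph V) [DecidableRel G.Adj]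
    (hiso : ∀ v : V, ∃ u, G.Adj v u)
    (v : V) (hdeg : 2 ≤ G.degree v)
    (hnp : ∀ w : V, G.Adj v w → G.degree w ≠ 1) :
    ∃ S T : Set (Sym2 V), S.Nonempty ∧ T.Nonempty ∧ Disjoint S T ∧
      S ∪ T = G.incidenceSet v ∧
      gamma G S + gamma G T < gamma G (S ∩ T) + gamma G (S ∪ T) := by
  classical
  -- two distinct neighbors of v
  obtain ⟨u₁, hu₁, u₂, hu₂, hne⟩ := Finset.one_lt_card.mp (by rw [SimpleGraph.card_neighborFinset_eq_degree]; omega : 1 < (G.neighborFinset v).card)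
  rw [SimpleGraph.mem_neighborFinset] at hu₁ hu₂
  set e₀ : Sym2 V := s(v, u₁) with he₀
  set S : Set (Sym2 V) := {e₀} with hSdef
  set T : Set (Sym2 V) := G.incidenceSet v \ S with hTdef
  have he₀mem : e₀ ∈ G.incidenceSet v := ⟨hu₁, Sym2.mem_mk_left v u₁⟩
  have he₁ne : s(v, u₂) ≠ e₀ := by
    intro h
    rw [he₀, Sym2.eq_iff] at h
    rcases h with ⟨-, h⟩ | ⟨h, -⟩
    · exact hne h.symm
    · exact G.irrefl (h ▸ hu₁)
  have hST : S ∪ T = G.incidenceSet v := Set.union_diff_cancel (Set.singleton_subset_iff.mpr he₀mem)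
  -- a vertex whose every neighbor is v has degree 1 and is adjacent to v: contradiction
  have key : ∀ w : V, w ≠ v → (∀ y, G.Adj w y → y = v) → False := by
    intro w hwv hall
    obtain ⟨x, hx⟩ := hiso w
    have hx' : G.Adj w v := (hall x hx) ▸ hx
    have hdeg1 : G.degree w = 1 := by
      have : G.neighborFinset w = {v} := by
        ext y
        simp only [SimpleGraph.mem_neighborFinset, Finset.mem_singleton]
        exact ⟨fun h => hall y h, fun h => h ▸ hx'⟩
      rw [SimpleGraph.degree, this, Finset.card_singleton]
    exact hnp w hx'.symm hdeg1
  -- closedVerts of S is empty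
  have hcS : closedVerts G S = ∅ := by
    ext w
    simp only [Set.mem_empty_iff_false, iff_false]
    intro hw
    by_cases hwv : w = v
    · subst hwv
      have := hw s(w, u₂) hu₂ (Sym2.mem_mk_left w u₂)
      exact he₁ne this
    · refine key w hwv fun y hy => ?_
      have := hw s(w, y) hy (Sym2.mem_mk_left w y)
      rw [hSdef, Set.mem_singleton_iff, he₀, Sym2.eq_iff] at this
      rcases this with ⟨h1, h2⟩ | ⟨h1, h2⟩
      · exact absurd h1 hwv
      · exact h2
  -- closedVerts of T is empty
  have hcT : closedVerts G T = ∅ := by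
    ext w
    simp only [Set.mem_empty_iff_false, iff_false]
    intro hw
    by_cases hwv : w = v
    · subst hwv
      have := hw e₀ hu₁ (Sym2.mem_mk_left w u₁)
      rw [hTdef] at this
      exact this.2 rfl
    · refine key w hwv fun y hy => ?_
      have := hw s(w, y) hy (Sym2.mem_mk_left w y)
      rw [hTdef] at this
      have hv : v ∈ s(w, y) := this.1.2
      rw [Sym2.mem_iff] at hv
      rcases hv with h | h
      · exact absurd h.symm hwv
      · exact h.symm
  -- gamma of S ∪ T is at least 1
  have hcU : v ∈ closedVerts G (S ∪ T) := by
    rw [hST]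
    intro e he hve
    exact ⟨he, hve⟩
  have h1 : 1 ≤ gamma G (S ∪ T) := by
    have := le_gamma G (S ∪ T) {v} ⟨by simpa using hcU, by
      intro a ha b hb
      simp only [Finset.mem_singleton] at ha hb
      subst ha; subst hb; exact G.irrefl⟩
    simpa using this
  refine ⟨S, T, ⟨e₀, rfl⟩, ⟨s(v, u₂), ⟨hu₂, Sym2.mem_mk_left v u₂⟩, he₁ne⟩,
    Set.disjoint_sdiff_right, hST, ?_⟩
  rw [gamma_of_closed_empty G S hcS, gamma_of_closed_empty G T hcT]
  omega
end

section
/- Let G = (V,E) be a finite simple graph and define the relaxed independent set game by γ̂(F) = α(G[F]) for F ⊆ E, where G[F] is the subgraph induced by the edge set F (its vertices are the endpoints of edges in F). Then γ̂ is supermodular (γ̂(S) + γ̂(T) ≤ γ̂(S ∩ T) + γ̂(S ∪ T) for all S, T ⊆ E) if and only if G contains no subgraph isomorphic to K₃ and no subgraph isomorphic to P₄ (the path on 4 vertices). -/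
/-- The vertex set of the edge-induced subgraph `G[F]`: endpoints of edges in `F`. -/
def edgeVerts {V : Type*} (F : Set (Sym2 V)) : Set V := {v | ∃ e ∈ F, v ∈ e}

/-- `gammaHat F = α(G[F])`: the maximum size of a set of endpoints of edges of `F`
no two of which are joined by an edge of `F`. -/
noncomputable def gammaHat {V : Type*} [Fintype V] (F : Set (Sym2 V)) : ℕ :=
  sSup {n | ∃ s : Finset V, ↑s ⊆ edgeVerts F ∧
    (∀ u ∈ s, ∀ v ∈ s, s(u, v) ∉ F) ∧ s.card = n}

/-- `G` contains a subgraph isomorphic to the triangle `K₃`. -/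
def HasK3 {V : Type*} (G : SimpleGraph V) : Prop :=
  ∃ a b c : V, a ≠ b ∧ a ≠ c ∧ b ≠ c ∧ G.Adj a b ∧ G.Adj b c ∧ G.Adj a c

/-- `G` contains a subgraph isomorphic to the path `P₄` on four vertices. -/
def HasP4 {V : Type*} (G : SimpleGraph V) : Prop :=
  ∃ a b c d : V, a ≠ b ∧ a ≠ c ∧ a ≠ d ∧ b ≠ c ∧ b ≠ d ∧ c ≠ d ∧
    G.Adj a b ∧ G.Adj b c ∧ G.Adj c d

/-!
If `G` has neither a triangle nor a `P₄`, every edge has an endpoint of degree one; choosing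
such an endpoint for each edge of `F ⊆ E` gives an independent set of `G[F]`, so `γ̂(F) = |F|`,
which is modular. Conversely, a triangle or a `P₄` gives a walk `a b c d` (with `d = a` for the
triangle) for which `S = {ab, bc}` and `T = {bc, cd}` have `γ̂(S) = γ̂(T) = 2`, while
`γ̂(S ∩ T) = 1` and `γ̂(S ∪ T) ≤ 2`, because an independent set meets every edge in at most one
vertex and `S ∪ T` is covered by the two edges `ab` and `cd`.
-/

lemma exists_pendant_endpoint {V : Type*} {G : SimpleGraph V} (hK : ¬ HasK3 G)
    (hP : ¬ HasP4 G) {e : Sym2 V} (he : e ∈ G.edgeSet) :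
    ∃ v ∈ e, ∀ f ∈ G.edgeSet, v ∈ f → f = e := by
  induction e using Sym2.ind with
  | _ a b =>
    by_contra! hcon
    obtain ⟨f, hfE, haf, hfe⟩ := hcon a (Sym2.mem_mk_left a b)
    obtain ⟨g, hgE, hbg, hge⟩ := hcon b (Sym2.mem_mk_right a b)
    obtain ⟨x, rfl⟩ := Sym2.mem_iff_exists.1 haf
    obtain ⟨y, rfl⟩ := Sym2.mem_iff_exists.1 hbg
    rw [SimpleGraph.mem_edgeSet] at he hfE hgE
    have hxb : x ≠ b := by rintro rfl; exact hfe rfl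
    have hya : y ≠ a := by rintro rfl; exact hge Sym2.eq_swap
    by_cases hxy : x = y
    · subst hxy
      exact hK ⟨a, b, x, he.ne, hfE.ne, hxb.symm, he, hgE, hfE⟩
    · exact hP ⟨x, a, b, y, hfE.ne', hxb, hxy, he.ne, hya.symm, hgE.ne, hfE.symm, he, hgE⟩

section

variable {V : Type*} [Fintype V]

lemma le_gammaHat {F : Set (Sym2 V)} (s : Finset V) (hsF : ↑s ⊆ edgeVerts F)
    (hind : ∀ u ∈ s, ∀ v ∈ s, s(u, v) ∉ F) :
    s.card ≤ gammaHat F :=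
  le_csSup ⟨Fintype.card V, by rintro n ⟨t, -, -, rfl⟩; exact t.card_le_univ⟩ ⟨s, hsF, hind, rfl⟩

lemma gammaHat_le {F : Set (Sym2 V)} {m : ℕ}
    (h : ∀ s : Finset V, ↑s ⊆ edgeVerts F → (∀ u ∈ s, ∀ v ∈ s, s(u, v) ∉ F) → s.card ≤ m) :
    gammaHat F ≤ m := by
  apply csSup_le
  · exact ⟨0, ∅, by simp, by simp, rfl⟩
  · rintro n ⟨s, hsF, hind, rfl⟩
    exact h s hsF hind

lemma gammaHat_le_card_of_cover {F : Set (Sym2 V)} (C : Finset (Sym2 V)) (hCF : ↑C ⊆ F)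
    (hcover : edgeVerts F ⊆ edgeVerts (C : Set (Sym2 V))) :
    gammaHat F ≤ C.card := by
  classical
  refine gammaHat_le fun s hsF hind => ?_
  have hsub : s ⊆ C.biUnion fun e => s.filter (· ∈ e) := by
    intro v hv
    obtain ⟨e, heC, hve⟩ := hcover (hsF hv)
    exact Finset.mem_biUnion.2 ⟨e, heC, Finset.mem_filter.2 ⟨hv, hve⟩⟩
  have hmeet : ∀ e ∈ C, (s.filter (· ∈ e)).card ≤ 1 := by
    refine fun e heC => Finset.card_le_one.2 fun u hu v hv => ?_
    rw [Finset.mem_filter] at hu hv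
    by_contra huv
    have he : e = s(u, v) := (Sym2.mem_and_mem_iff huv).1 ⟨hu.2, hv.2⟩
    exact hind u hu.1 v hv.1 (he ▸ hCF heC)
  simpa using (Finset.card_le_card hsub).trans (Finset.card_biUnion_le_card_mul _ _ 1 hmeet)

lemma gammaHat_le_ncard (F : Set (Sym2 V)) : gammaHat F ≤ F.ncard := by
  rw [Set.ncard_eq_toFinset_card F]
  exact gammaHat_le_card_of_cover _ (by simp) (by simp)

lemma two_le_gammaHat_pair {a b c : V} (hab : a ≠ b) (hbc : b ≠ c) (hac : a ≠ c) :
    2 ≤ gammaHat {s(a, b), s(b, c)} := by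
  classical
  have hcard : ({a, c} : Finset V).card = 2 := Finset.card_pair hac
  refine hcard ▸ le_gammaHat _ ?_ ?_
  · intro v hv
    simp only [Finset.coe_insert, Finset.coe_singleton, Set.mem_insert_iff,
      Set.mem_singleton_iff] at hv
    rcases hv with rfl | rfl
    exacts [⟨s(v, b), by simp, Sym2.mem_mk_left _ _⟩, ⟨s(b, v), by simp, Sym2.mem_mk_right _ _⟩]
  · simp only [Finset.mem_insert, Finset.mem_singleton]
    rintro u (rfl | rfl) v (rfl | rfl) <;> simp [hab, hac, hbc.symm, hac.symm]

-- `d = a` is allowed: this is the triangle case.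
lemma gammaHat_inter_add_gammaHat_union_lt {a b c d : V} (hab : a ≠ b) (hbc : b ≠ c)
    (hcd : c ≠ d) (hac : a ≠ c) (hbd : b ≠ d) :
    gammaHat ({s(a, b), s(b, c)} ∩ {s(b, c), s(c, d)}) +
        gammaHat ({s(a, b), s(b, c)} ∪ {s(b, c), s(c, d)}) <
      gammaHat {s(a, b), s(b, c)} + gammaHat {s(b, c), s(c, d)} := by
  classical
  have hinter : ({s(a, b), s(b, c)} ∩ {s(b, c), s(c, d)} : Set (Sym2 V)) = {s(b, c)} := by
    ext e
    simp only [Set.mem_inter_iff, Set.mem_insert_iff, Set.mem_singleton_iff]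
    constructor
    · rintro ⟨rfl | rfl, h⟩ <;> simp_all
    · rintro rfl; simp
  have hI : gammaHat ({s(a, b), s(b, c)} ∩ {s(b, c), s(c, d)}) ≤ 1 := by
    rw [hinter]
    exact gammaHat_le_card_of_cover {s(b, c)} (by simp) (by simp)
  have hU : gammaHat ({s(a, b), s(b, c)} ∪ {s(b, c), s(c, d)}) ≤ 2 := by
    refine (gammaHat_le_card_of_cover {s(a, b), s(c, d)} (by simp [Set.insert_subset_iff])
      ?_).trans (Finset.card_le_two)
    rintro v ⟨e, he, hve⟩
    simp only [Set.mem_union, Set.mem_insert_iff, Set.mem_singleton_iff] at he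
    rcases he with (rfl | rfl) | (rfl | rfl) <;> rcases Sym2.mem_iff.1 hve with rfl | rfl <;>
      simp [edgeVerts]
  have hS := two_le_gammaHat_pair hab hbc hac
  have hT := two_le_gammaHat_pair hbc hcd hbd
  omega

lemma gammaHat_eq_ncard {G : SimpleGraph V} (hK : ¬ HasK3 G) (hP : ¬ HasP4 G)
    {F : Set (Sym2 V)} (hF : F ⊆ G.edgeSet) :
    gammaHat F = F.ncard := by
  classical
  refine (gammaHat_le_ncard F).antisymm ?_
  have hpendant : ∀ e : Sym2 V, ∃ v ∈ e, e ∈ F → ∀ f ∈ G.edgeSet, v ∈ f → f = e := by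
    intro e
    by_cases he : e ∈ F
    · obtain ⟨v, hve, hv⟩ := exists_pendant_endpoint hK hP (hF he)
      exact ⟨v, hve, fun _ => hv⟩
    · exact ⟨e.out.1, Sym2.out_fst_mem e, fun he' => absurd he' he⟩
  choose leaf hleaf_mem hleaf_pendant using hpendant
  have hinj : Set.InjOn leaf F := fun e he e' he' h =>
    hleaf_pendant e' he' e (hF he) (h ▸ hleaf_mem e)
  rw [Set.ncard_eq_toFinset_card F, ← Finset.card_image_of_injOn (by simpa using hinj)]
  refine le_gammaHat _ ?_ ?_
  · intro v hv
    obtain ⟨e, he, rfl⟩ := by simpa using hv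
    exact ⟨e, he, hleaf_mem e⟩
  · simp only [Finset.mem_image, Set.Finite.mem_toFinset]
    rintro _ ⟨e, he, rfl⟩ _ ⟨e', he', rfl⟩ hmem
    have h := (hleaf_pendant e he _ (hF hmem) (Sym2.mem_mk_left _ _)).symm.trans
      (hleaf_pendant e' he' _ (hF hmem) (Sym2.mem_mk_right _ _))
    subst h
    exact (hF hmem : G.Adj _ _).ne rfl

end

theorem stmt10_general {V : Type*} [Fintype V] (G : SimpleGraph V) :
    (∀ S T : Set (Sym2 V), S ⊆ G.edgeSet → T ⊆ G.edgeSet →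
        gammaHat S + gammaHat T ≤ gammaHat (S ∩ T) + gammaHat (S ∪ T)) ↔
      (¬ HasK3 G ∧ ¬ HasP4 G) := by
  constructor
  · intro hsup
    have pair_subset {x y z : V} (hxy : G.Adj x y) (hyz : G.Adj y z) :
        {s(x, y), s(y, z)} ⊆ G.edgeSet := by
      simp [Set.insert_subset_iff, hxy, hyz]
    refine ⟨?_, ?_⟩
    · rintro ⟨a, b, c, hab, hac, hbc, eab, ebc, eac⟩
      have := hsup _ _ (pair_subset eab ebc) (pair_subset ebc eac.symm)
      exact (gammaHat_inter_add_gammaHat_union_lt hab hbc hac.symm hac hab.symm).not_ge this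
    · rintro ⟨a, b, c, d, hab, hac, -, hbc, hbd, hcd, eab, ebc, ecd⟩
      have := hsup _ _ (pair_subset eab ebc) (pair_subset ebc ecd)
      exact (gammaHat_inter_add_gammaHat_union_lt hab hbc hcd hac hbd).not_ge this
  · rintro ⟨hK, hP⟩ S T hS hT
    rw [gammaHat_eq_ncard hK hP hS, gammaHat_eq_ncard hK hP hT,
      gammaHat_eq_ncard hK hP (Set.inter_subset_left.trans hS),
      gammaHat_eq_ncard hK hP (Set.union_subset hS hT), Set.ncard_inter_add_ncard_union]

theorem stmt10 {V : Type*} [Fintype V] (G : SimpleGraph V)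
    (hiso : ∀ v : V, ∃ u, G.Adj v u) :
    (∀ S T : Set (Sym2 V), S ⊆ G.edgeSet → T ⊆ G.edgeSet →
        gammaHat S + gammaHat T ≤ gammaHat (S ∩ T) + gammaHat (S ∪ T)) ↔
      (¬ HasK3 G ∧ ¬ HasP4 G) :=
  stmt10_general G
end
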